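/- Gumbel-max trick (used as the basis for the paper's continuous relaxation of categorical sampling): let d ≥ 1, let p_1, …, p_d > 0 with Σ_i p_i = 1, let U_1, …, U_d be i.i.d. Uniform(0,1) random variables and set G_i = −log(−log U_i). Then almost surely the vector (log p_1 + G_1, …, log p_d + G_d) has a unique maximizing index, and for every j ∈ {1,…,d}, P( log p_j + G_j > log p_i + G_i for all i ≠ j ) = p_j; i.e., the argmax is distributed according to the categorical distribution with probabilities (p_1, …, p_d). -/

import Mathlib

/-!
The Gumbel transform `g s = -log (-log s)` is increasing on `(0, 1)` and satisfies
`g (t ^ c) = g t - log c`, so `log a + g s < log b + g t` exactly when `s < t ^ (a / b)`.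
Conditioning on the `j`-th uniform being `t`, the `j`-th score wins with probability
`∏_{i ≠ j} t ^ (p i / p j) = t ^ (1 / p j - 1)`, and `∫₀¹ t ^ (1 / p j - 1) dt = p j`.
The winning events are disjoint and their probabilities sum to `1`, so almost surely exactly one
of them occurs.
-/

open MeasureTheory ProbabilityTheory

noncomputable def gumbelScore (a s : ℝ) : ℝ := Real.log a + -Real.log (-Real.log s)

def gumbelMaxEvent {ι : Type*} (p : ι → ℝ) (j : ι) : Set (ι → ℝ) :=
  {x | ∀ i, i ≠ j → gumbelScore (p i) (x i) < gumbelScore (p j) (x j)}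

instance : IsProbabilityMeasure (volume.restrict (Set.Ioo (0 : ℝ) 1)) :=
  ⟨by simp⟩

lemma strictMonoOn_neg_log_neg_log :
    StrictMonoOn (fun s : ℝ => -Real.log (-Real.log s)) (Set.Ioo 0 1) := by
  intro s hs t ht hst
  have hlog : Real.log s < Real.log t := Real.log_lt_log hs.1 hst
  have ht' : 0 < -Real.log t := neg_pos.mpr (Real.log_neg ht.1 ht.2)
  simpa using Real.log_lt_log ht' (neg_lt_neg hlog)

lemma neg_log_neg_log_rpow {t c : ℝ} (ht : t ∈ Set.Ioo (0 : ℝ) 1) (hc : 0 < c) :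
    -Real.log (-Real.log (t ^ c)) = -Real.log c + -Real.log (-Real.log t) := by
  have ht' : 0 < -Real.log t := neg_pos.mpr (Real.log_neg ht.1 ht.2)
  rw [Real.log_rpow ht.1, ← mul_neg, Real.log_mul hc.ne' ht'.ne']
  ring

lemma gumbelScore_lt_gumbelScore_iff {a b s t : ℝ} (ha : 0 < a) (hb : 0 < b)
    (hs : s ∈ Set.Ioo (0 : ℝ) 1) (ht : t ∈ Set.Ioo (0 : ℝ) 1) :
    gumbelScore a s < gumbelScore b t ↔ s < t ^ (a / b) := by
  have hpow : t ^ (a / b) ∈ Set.Ioo (0 : ℝ) 1 :=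
    ⟨Real.rpow_pos_of_pos ht.1 _, Real.rpow_lt_one ht.1.le ht.2 (div_pos ha hb)⟩
  rw [← strictMonoOn_neg_log_neg_log.lt_iff_lt hs hpow, neg_log_neg_log_rpow ht (div_pos ha hb),
    Real.log_div ha.ne' hb.ne', gumbelScore, gumbelScore]
  constructor <;> intro h <;> linarith

lemma measurable_gumbelScore (a : ℝ) : Measurable (gumbelScore a) := by
  unfold gumbelScore; fun_prop

lemma measurableSet_gumbelMaxEvent {ι : Type*} [Countable ι] (p : ι → ℝ) (j : ι) :
    MeasurableSet (gumbelMaxEvent p j) := by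
  simp only [gumbelMaxEvent, Set.ofPred_forall]
  exact .iInter fun i => .iInter fun _ => measurableSet_lt
    ((measurable_gumbelScore _).comp (measurable_pi_apply i))
    ((measurable_gumbelScore _).comp (measurable_pi_apply j))

lemma pairwise_disjoint_gumbelMaxEvent {ι : Type*} (p : ι → ℝ) :
    Pairwise (Function.onFun Disjoint (gumbelMaxEvent p)) := by
  intro j k hjk
  rw [Function.onFun, Set.disjoint_left]
  intro x hj hk
  exact lt_asymm (hj k hjk.symm) (hk j hjk)

lemma uniform_setOf_gumbelScore_lt {a b t : ℝ} (ha : 0 < a) (hb : 0 < b)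
    (ht : t ∈ Set.Ioo (0 : ℝ) 1) :
    volume.restrict (Set.Ioo (0 : ℝ) 1) {s | gumbelScore a s < gumbelScore b t} =
      ENNReal.ofReal (t ^ (a / b)) := by
  have hset :
      {s | gumbelScore a s < gumbelScore b t} ∩ Set.Ioo 0 1 = Set.Ioo 0 (t ^ (a / b)) := by
    ext s
    simp only [Set.mem_inter_iff, Set.mem_ofPred_eq, Set.mem_Ioo]
    constructor
    · rintro ⟨h, hs⟩
      exact ⟨hs.1, (gumbelScore_lt_gumbelScore_iff ha hb hs ht).1 h⟩
    · rintro ⟨hs₀, hst⟩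
      have hs : s ∈ Set.Ioo (0 : ℝ) 1 :=
        ⟨hs₀, hst.trans_le (Real.rpow_le_one ht.1.le ht.2.le (div_pos ha hb).le)⟩
      exact ⟨(gumbelScore_lt_gumbelScore_iff ha hb hs ht).2 hst, hs⟩
  rw [Measure.restrict_apply' measurableSet_Ioo, hset, Real.volume_Ioo, sub_zero]

lemma setLIntegral_Ioo_zero_one_rpow {r : ℝ} (hr : -1 < r) :
    ∫⁻ t in Set.Ioo (0 : ℝ) 1, ENNReal.ofReal (t ^ r) = ENNReal.ofReal (1 / (r + 1)) := by
  have hint : IntegrableOn (fun t : ℝ => t ^ r) (Set.Ioo 0 1) :=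
    (intervalIntegrable_iff_integrableOn_Ioo_of_le zero_le_one).1
      (intervalIntegral.intervalIntegrable_rpow' hr)
  rw [← ofReal_integral_eq_lintegral_ofReal hint
    ((ae_restrict_mem measurableSet_Ioo).mono fun t ht => (Real.rpow_pos_of_pos ht.1 _).le),
    ← integral_Ioc_eq_integral_Ioo, ← intervalIntegral.integral_of_le zero_le_one,
    integral_rpow (Or.inl hr), Real.one_rpow, Real.zero_rpow (by linarith), sub_zero]

lemma insertNth_mem_gumbelMaxEvent_iff {n : ℕ} (p : Fin (n + 1) → ℝ) (j : Fin (n + 1))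
    (t : ℝ) (y : Fin n → ℝ) :
    Fin.insertNth j t y ∈ gumbelMaxEvent p j ↔
      ∀ k, gumbelScore (p (j.succAbove k)) (y k) < gumbelScore (p j) t := by
  simp [gumbelMaxEvent, Fin.forall_iff_succAbove j]

lemma pi_uniform_gumbelMaxEvent {d : ℕ} (p : Fin d → ℝ) (hp : ∀ i, 0 < p i)
    (hpsum : ∑ i, p i = 1) (j : Fin d) :
    Measure.pi (fun _ => volume.restrict (Set.Ioo (0 : ℝ) 1)) (gumbelMaxEvent p j) =
      ENNReal.ofReal (p j) := by
  obtain ⟨n, rfl⟩ := Nat.exists_eq_add_one_of_ne_zero j.pos.ne'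
  set ν := volume.restrict (Set.Ioo (0 : ℝ) 1)
  set r := (1 - p j) / p j
  have hsum_others : ∑ k, p (j.succAbove k) = 1 - p j := by
    linarith [Fin.sum_univ_succAbove p j]
  have hslice : ∀ t ∈ Set.Ioo (0 : ℝ) 1,
      Measure.pi (fun _ : Fin n => ν) {y | Fin.insertNth j t y ∈ gumbelMaxEvent p j} =
        ENNReal.ofReal (t ^ r) := by
    intro t ht
    have hpi : {y | Fin.insertNth j t y ∈ gumbelMaxEvent p j} =
        Set.univ.pi fun k => {s | gumbelScore (p (j.succAbove k)) s < gumbelScore (p j) t} := by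
      ext y
      simp [insertNth_mem_gumbelMaxEvent_iff]
    rw [hpi, Measure.pi_pi,
      Finset.prod_congr rfl fun k _ => uniform_setOf_gumbelScore_lt (hp _) (hp j) ht,
      ← ENNReal.ofReal_prod_of_nonneg fun k _ => (Real.rpow_pos_of_pos ht.1 _).le,
      ← Real.rpow_sum_of_pos ht.1, ← Finset.sum_div, hsum_others]
  have hmp := (measurePreserving_piFinSuccAbove (fun _ : Fin (n + 1) => ν) j).symm
  rw [← hmp.measure_preimage (measurableSet_gumbelMaxEvent p j).nullMeasurableSet,
    Measure.prod_apply (hmp.measurable (measurableSet_gumbelMaxEvent p j))]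
  calc _ = ∫⁻ t in Set.Ioo (0 : ℝ) 1, ENNReal.ofReal (t ^ r) :=
        setLIntegral_congr_fun measurableSet_Ioo hslice
    _ = ENNReal.ofReal (p j) := by
        have hr : r + 1 = 1 / p j := by rw [div_add_one (hp j).ne', sub_add_cancel]
        rw [setLIntegral_Ioo_zero_one_rpow (by linarith [one_div_pos.2 (hp j)]), hr,
          one_div_one_div]

lemma ae_existsUnique_mem_of_tsum_measure_eq_one {α ι : Type*} [MeasurableSpace α]
    {μ : Measure α} [IsProbabilityMeasure μ] [Countable ι] {E : ι → Set α}
    (hE : ∀ i, MeasurableSet (E i)) (hdisj : Pairwise (Function.onFun Disjoint E))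
    (hsum : ∑' i, μ (E i) = 1) :
    ∀ᵐ x ∂μ, ∃! i, x ∈ E i := by
  have hcover : ∀ᵐ x ∂μ, x ∈ ⋃ i, E i := by
    rw [ae_mem_iff_measure_eq (MeasurableSet.iUnion hE).nullMeasurableSet,
      measure_iUnion hdisj hE, hsum, measure_univ]
  filter_upwards [hcover] with x hx
  obtain ⟨i, hi⟩ := Set.mem_iUnion.1 hx
  exact ⟨i, hi, fun k hk => hdisj.eq (Set.not_disjoint_iff.2 ⟨x, hk, hi⟩)⟩

lemma ae_existsUnique_mem_gumbelMaxEvent {d : ℕ} (p : Fin d → ℝ) (hp : ∀ i, 0 < p i)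
    (hpsum : ∑ i, p i = 1) :
    ∀ᵐ x ∂Measure.pi (fun _ : Fin d => volume.restrict (Set.Ioo (0 : ℝ) 1)),
      ∃! j, x ∈ gumbelMaxEvent p j := by
  refine ae_existsUnique_mem_of_tsum_measure_eq_one (measurableSet_gumbelMaxEvent p)
    (pairwise_disjoint_gumbelMaxEvent p) ?_
  simp_rw [tsum_fintype, pi_uniform_gumbelMaxEvent p hp hpsum]
  rw [← ENNReal.ofReal_sum_of_nonneg fun i _ => (hp i).le, hpsum, ENNReal.ofReal_one]

theorem gumbel_max_trick_general {d : ℕ}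
    {Ω : Type*} [MeasurableSpace Ω] (μ : Measure Ω) [IsProbabilityMeasure μ]
    (p : Fin d → ℝ) (hp : ∀ i, 0 < p i) (hpsum : ∑ i, p i = 1)
    (U : Fin d → Ω → ℝ)
    (hUindep : iIndepFun U μ)
    (hUunif : ∀ i, μ.map (U i) = volume.restrict (Set.Ioo (0 : ℝ) 1))
    (G : Fin d → Ω → ℝ) (hG : ∀ i ω, G i ω = -Real.log (-Real.log (U i ω))) :
    (∀ᵐ ω ∂μ, ∃! j : Fin d,
        ∀ i, i ≠ j → Real.log (p i) + G i ω < Real.log (p j) + G j ω) ∧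
    (∀ j : Fin d,
        μ {ω | ∀ i, i ≠ j → Real.log (p i) + G i ω < Real.log (p j) + G j ω} =
          ENNReal.ofReal (p j)) := by
  obtain rfl : G = fun i ω => -Real.log (-Real.log (U i ω)) := funext₂ hG
  have hU : ∀ i, HasLaw (U i) (volume.restrict (Set.Ioo 0 1)) μ := fun i =>
    ⟨.of_map_ne_zero (by rw [hUunif i]; exact IsProbabilityMeasure.ne_zero _), hUunif i⟩
  have hUvec := hUindep.hasLaw_pi hU
  refine ⟨ae_of_ae_map (p := fun x => ∃! j, x ∈ gumbelMaxEvent p j) hUvec.aemeasurable ?_,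
    fun j => ?_⟩
  · rw [hUvec.map_eq]
    exact ae_existsUnique_mem_gumbelMaxEvent p hp hpsum
  · rw [← pi_uniform_gumbelMaxEvent p hp hpsum j]
    exact hUvec.measure_eq (p := (· ∈ gumbelMaxEvent p j)) (measurableSet_gumbelMaxEvent p j)

/-- **The Gumbel-max trick.** Let `p₁, …, p_d > 0` with `Σ_i p_i = 1`, let
`U₁, …, U_d` be i.i.d. `Uniform(0,1)` random variables and set
`G_i = −log(−log U_i)` (so each `G_i` is `Gumbel(0,1)`). Then almost surely the vector
`(log p₁ + G₁, …, log p_d + G_d)` has a unique maximizing index, and for every `j`,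
`P(log p_j + G_j > log p_i + G_i for all i ≠ j) = p_j`; i.e. the argmax is distributed
according to the categorical distribution with probabilities `(p₁, …, p_d)`. -/
theorem gumbel_max_trick {d : ℕ} (hd : 1 ≤ d)
    {Ω : Type*} [MeasurableSpace Ω] (μ : Measure Ω) [IsProbabilityMeasure μ]
    (p : Fin d → ℝ) (hp : ∀ i, 0 < p i) (hpsum : ∑ i, p i = 1)
    (U : Fin d → Ω → ℝ) (hUmeas : ∀ i, Measurable (U i))
    (hUindep : iIndepFun U μ)
    (hUunif : ∀ i, μ.map (U i) = volume.restrict (Set.Ioo (0 : ℝ) 1))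
    (G : Fin d → Ω → ℝ) (hG : ∀ i ω, G i ω = -Real.log (-Real.log (U i ω))) :
    (∀ᵐ ω ∂μ, ∃! j : Fin d,
        ∀ i, i ≠ j → Real.log (p i) + G i ω < Real.log (p j) + G j ω) ∧
    (∀ j : Fin d,
        μ {ω | ∀ i, i ≠ j → Real.log (p i) + G i ω < Real.log (p j) + G j ω} =
          ENNReal.ofReal (p j)) :=
  gumbel_max_trick_general μ p hp hpsum U hUindep hUunif G hG
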